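/- If the observability Gramian W_o(t₀,t₁) = Σ_{t=t₀}^{t₁−1} (Aᵀ)^{t−t₀} * Cᵀ * C * A^{t−t₀} is U-positive definite, then any initial state X₀ of the system X_{t+1} = A*X_t, Y_t = C*X_t is uniquely determined by the outputs Y_t on [t₀,t₁]; explicitly X₀ = W_o(t₀,t₁)^{−1} * Σ_{t=t₀}^{t₁−1} (Aᵀ)^{t−t₀} * Cᵀ * Y_t. Conversely, if W_o(t₀,t₁) is not U-positive definite then two distinct initial states produce identical outputs on [t₀,t₁]. -/
import Mathlib


open scoped BigOperators

/-- Multi-index for an `N`-dimensional shape `J`. -/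
abbrev MIdx {N : ℕ} (J : Fin N → ℕ) := ∀ n, Fin (J n)

/-- An even-order paired tensor of shape `J₁×I₁×⋯×J_N×I_N`, viewed with its
index pairs grouped: entry `A j i = A_{j₁ i₁ … j_N i_N}`. -/
abbrev PTensor {N : ℕ} (R : Type) (J I : Fin N → ℕ) := MIdx J → MIdx I → R

/-- The Einstein product of even-order paired tensors. -/
def einstein {N : ℕ} {R : Type} [CommRing R] {J K I : Fin N → ℕ}
    (A : PTensor R J K) (B : PTensor R K I) : PTensor R J I :=
  fun j i => ∑ k : MIdx K, A j k * B k i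

/-- The U-transpose, swapping each index pair. -/
def transp {N : ℕ} {R : Type} [CommRing R] {J I : Fin N → ℕ}
    (A : PTensor R J I) : PTensor R I J :=
  fun i j => A j i

/-- The U-identity tensor. -/
def uid {N : ℕ} (R : Type) [CommRing R] (J : Fin N → ℕ) : PTensor R J J :=
  fun j i => if j = i then 1 else 0

/-- Einstein-product powers `A^k`. -/
def epow {N : ℕ} {R : Type} [CommRing R] {J : Fin N → ℕ}
    (A : PTensor R J J) : ℕ → PTensor R J J
  | 0 => uid R J
  | (k+1) => einstein A (epow A k)

/-- Action of an even-order paired tensor on an `N`-th order tensor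
(the Einstein product `A * x`). -/
def mulE {N : ℕ} {R : Type} [CommRing R] {J I : Fin N → ℕ}
    (A : PTensor R J I) (x : MIdx I → R) : MIdx J → R :=
  fun j => ∑ i, A j i * x i

/-- Frobenius norm of an `N`-th order tensor. -/
noncomputable def fro {N : ℕ} {J : Fin N → ℕ} (x : MIdx J → ℝ) : ℝ :=
  Real.sqrt (∑ j, x j ^ 2)

/-- The scalar `xᵀ * A * y` (Einstein products). -/
def bilin {N : ℕ} {J : Fin N → ℕ} (A : PTensor ℝ J J)
    (x y : MIdx J → ℝ) : ℝ :=
  ∑ j, ∑ i, x j * A j i * y i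

/-- U-positive definiteness: `Xᵀ * A * X > 0` for all nonzero `X`. -/
def UPosDef {N : ℕ} {J : Fin N → ℕ} (A : PTensor ℝ J J) : Prop :=
  ∀ x : MIdx J → ℝ, x ≠ 0 → 0 < bilin A x x

/-- The mixed-radix index linearization (0-based version of
`ivec(j,𝒥) = j₁ + Σ_{k≥2} (j_k − 1)∏_{l<k} J_l`). -/
def ivec {N : ℕ} (J : Fin N → ℕ) (j : MIdx J) : ℕ :=
  ∑ k, (j k : ℕ) * ∏ l ∈ Finset.Iio k, J l

/-- The unfolding map `φ`: the matrix whose `(ivec j, ivec i)` entry is `A j i`. -/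
noncomputable def phi {N : ℕ} {J I : Fin N → ℕ} (A : PTensor ℝ J I) :
    Matrix (Fin (∏ n, J n)) (Fin (∏ n, I n)) ℝ :=
  fun p q => ∑ j : MIdx J, ∑ i : MIdx I,
    if ivec J j = (p : ℕ) ∧ ivec I i = (q : ℕ) then A j i else 0

/-- The observability Gramian `W_o(t₀,t₁) = Σ_{t=t₀}^{t₁−1} (Aᵀ)^{t−t₀} * Cᵀ * C * A^{t−t₀}`. -/
def obsGramian {N : ℕ} {J I : Fin N → ℕ}
    (A : PTensor ℝ J J) (C : PTensor ℝ I J) (t₀ t₁ : ℕ) : PTensor ℝ J J :=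
  ∑ t ∈ Finset.Icc t₀ (t₁ - 1),
    einstein (epow (transp A) (t - t₀))
      (einstein (transp C) (einstein C (epow A (t - t₀))))

section Helpers

variable {N : ℕ} {J K L I : Fin N → ℕ}

lemma mulE_einstein (A : PTensor ℝ J K) (B : PTensor ℝ K I) (x : MIdx I → ℝ) :
    mulE (einstein A B) x = mulE A (mulE B x) := by
  funext j
  simp only [mulE, einstein, Finset.sum_mul, Finset.mul_sum]
  rw [Finset.sum_comm]
  exact Finset.sum_congr rfl fun k _ => Finset.sum_congr rfl fun i _ => by ring

lemma mulE_uid (x : MIdx J → ℝ) : mulE (uid ℝ J) x = x := by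
  funext j
  simp [mulE, uid]

lemma mulE_zero (A : PTensor ℝ J I) : mulE A (0 : MIdx I → ℝ) = 0 := by
  funext j; simp [mulE]

lemma mulE_sub (A : PTensor ℝ J I) (x y : MIdx I → ℝ) :
    mulE A (x - y) = mulE A x - mulE A y := by
  funext j
  simp [mulE, mul_sub, Finset.sum_sub_distrib]

lemma mulE_sum {α : Type*} (s : Finset α) (M : α → PTensor ℝ J I) (x : MIdx I → ℝ) :
    mulE (∑ t ∈ s, M t) x = ∑ t ∈ s, mulE (M t) x := by
  funext j
  simp [mulE, Finset.sum_apply, Finset.sum_mul]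
  rw [Finset.sum_comm]

lemma einstein_assoc (A : PTensor ℝ J K) (B : PTensor ℝ K L) (D : PTensor ℝ L I) :
    einstein (einstein A B) D = einstein A (einstein B D) := by
  funext j i
  simp only [einstein, Finset.sum_mul, Finset.mul_sum]
  rw [Finset.sum_comm]
  exact Finset.sum_congr rfl fun k _ => Finset.sum_congr rfl fun l _ => by ring

lemma transp_einstein (A : PTensor ℝ J K) (B : PTensor ℝ K I) :
    transp (einstein A B) = einstein (transp B) (transp A) := by
  funext i j
  simp only [einstein, transp]
  exact Finset.sum_congr rfl fun k _ => by ring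

lemma epow_succ' (A : PTensor ℝ J J) (k : ℕ) :
    epow A (k + 1) = einstein (epow A k) A := by
  induction k with
  | zero =>
      funext j i
      simp [epow, einstein, uid]
  | succ k ih =>
      show einstein A (epow A (k+1)) = einstein (epow A (k+1)) A
      conv_lhs => rw [ih]
      rw [← einstein_assoc]
      rfl

lemma transp_epow (A : PTensor ℝ J J) (k : ℕ) :
    transp (epow A k) = epow (transp A) k := by
  induction k with
  | zero =>
      funext j i
      simp [epow, transp, uid, eq_comm]
  | succ k ih =>
      rw [epow_succ' A k, transp_einstein, ih]
      rfl

lemma bilin_mulE (M : PTensor ℝ J J) (x y : MIdx J → ℝ) :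
    bilin M x y = ∑ j, x j * mulE M y j := by
  unfold bilin mulE
  refine Finset.sum_congr rfl fun j _ => ?_
  rw [Finset.mul_sum]
  exact Finset.sum_congr rfl fun i _ => by ring

lemma bilin_self_transp (S : PTensor ℝ I J) (x : MIdx J → ℝ) :
    bilin (einstein (transp S) S) x x = ∑ k, (mulE S x k) ^ 2 := by
  have h1 : bilin (einstein (transp S) S) x x
      = ∑ k, ∑ j, ∑ i, x j * (S k j * S k i) * x i := by
    symm
    unfold bilin einstein transp
    rw [Finset.sum_comm]
    refine Finset.sum_congr rfl fun j _ => ?_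
    rw [Finset.sum_comm]
    refine Finset.sum_congr rfl fun i _ => ?_
    rw [Finset.mul_sum, Finset.sum_mul]
  rw [h1]
  refine Finset.sum_congr rfl fun k _ => ?_
  have h2 : mulE S x k = ∑ i, S k i * x i := rfl
  rw [h2, sq, Finset.sum_mul_sum]
  exact Finset.sum_congr rfl fun j _ => Finset.sum_congr rfl fun i _ => by ring

lemma bilin_sum {α : Type*} (s : Finset α) (M : α → PTensor ℝ J J) (x y : MIdx J → ℝ) :
    bilin (∑ t ∈ s, M t) x y = ∑ t ∈ s, bilin (M t) x y := by
  simp only [bilin_mulE, mulE_sum, Finset.sum_apply, Finset.mul_sum]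
  rw [Finset.sum_comm]

lemma gram_term_eq (A : PTensor ℝ J J) (C : PTensor ℝ I J) (k : ℕ) :
    einstein (epow (transp A) k) (einstein (transp C) (einstein C (epow A k)))
      = einstein (transp (einstein C (epow A k))) (einstein C (epow A k)) := by
  rw [transp_einstein, transp_epow, einstein_assoc]

lemma bilin_obsGramian (A : PTensor ℝ J J) (C : PTensor ℝ I J) (t₀ t₁ : ℕ)
    (x : MIdx J → ℝ) :
    bilin (obsGramian A C t₀ t₁) x x
      = ∑ t ∈ Finset.Icc t₀ (t₁ - 1), ∑ k, (mulE C (mulE (epow A (t - t₀)) x) k) ^ 2 := by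
  rw [obsGramian, bilin_sum]
  refine Finset.sum_congr rfl fun t _ => ?_
  rw [gram_term_eq, bilin_self_transp, ← mulE_einstein]

lemma state_formula (A : PTensor ℝ J J) (X : ℕ → MIdx J → ℝ) (t₀ : ℕ)
    (hX : ∀ t, t₀ ≤ t → X (t + 1) = mulE A (X t)) (k : ℕ) :
    X (t₀ + k) = mulE (epow A k) (X t₀) := by
  induction k with
  | zero => simp [epow, mulE_uid]
  | succ k ih =>
      rw [show t₀ + (k + 1) = (t₀ + k) + 1 from rfl, hX _ (Nat.le_add_right _ _), ih,
        show epow A (k+1) = einstein A (epow A k) from rfl, mulE_einstein]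

end Helpers

/-- if the observability Gramian is U-positive definite then the
initial state of `X_{t+1} = A*X_t`, `Y_t = C*X_t` is uniquely determined by the
outputs on `[t₀,t₁]`, explicitly
`X₀ = W_o⁻¹ * Σ_{t=t₀}^{t₁−1} (Aᵀ)^{t−t₀} * Cᵀ * Y_t`; conversely, if it is not
U-positive definite then two distinct initial states produce the same outputs. -/
theorem obsGramian_posDef_observable {N : ℕ} {J I : Fin N → ℕ}
    (A : PTensor ℝ J J) (C : PTensor ℝ I J) (t₀ t₁ : ℕ) (ht : t₀ < t₁) :
    (∀ Winv : PTensor ℝ J J,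
      einstein (obsGramian A C t₀ t₁) Winv = uid ℝ J →
      einstein Winv (obsGramian A C t₀ t₁) = uid ℝ J →
      ∀ X : ℕ → MIdx J → ℝ, (∀ t, t₀ ≤ t → X (t + 1) = mulE A (X t)) →
        X t₀ = mulE Winv (∑ t ∈ Finset.Icc t₀ (t₁ - 1),
          mulE (epow (transp A) (t - t₀)) (mulE (transp C) (mulE C (X t))))) ∧
    (UPosDef (obsGramian A C t₀ t₁) →
      ∀ X X' : ℕ → MIdx J → ℝ,
        (∀ t, t₀ ≤ t → X (t + 1) = mulE A (X t)) →
        (∀ t, t₀ ≤ t → X' (t + 1) = mulE A (X' t)) →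
        (∀ t ∈ Finset.Icc t₀ (t₁ - 1), mulE C (X t) = mulE C (X' t)) →
        X t₀ = X' t₀) ∧
    (¬ UPosDef (obsGramian A C t₀ t₁) →
      ∃ X X' : ℕ → MIdx J → ℝ,
        (∀ t, t₀ ≤ t → X (t + 1) = mulE A (X t)) ∧
        (∀ t, t₀ ≤ t → X' (t + 1) = mulE A (X' t)) ∧
        (∀ t ∈ Finset.Icc t₀ (t₁ - 1), mulE C (X t) = mulE C (X' t)) ∧
        X t₀ ≠ X' t₀) := by
  refine ⟨?_, ?_, ?_⟩
  · -- explicit reconstruction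
    intro Winv hWr hWl X hX
    have hstate : ∀ t ∈ Finset.Icc t₀ (t₁ - 1), X t = mulE (epow A (t - t₀)) (X t₀) := by
      intro t htm
      have h0 : t₀ ≤ t := (Finset.mem_Icc.mp htm).1
      have h := state_formula A X t₀ hX (t - t₀)
      rwa [Nat.add_sub_cancel' h0] at h
    have key : (∑ t ∈ Finset.Icc t₀ (t₁ - 1),
        mulE (epow (transp A) (t - t₀)) (mulE (transp C) (mulE C (X t))))
        = mulE (obsGramian A C t₀ t₁) (X t₀) := by
      rw [obsGramian, mulE_sum]
      refine Finset.sum_congr rfl fun t htm => ?_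
      rw [hstate t htm, mulE_einstein, mulE_einstein, mulE_einstein]
    rw [key, ← mulE_einstein, hWl, mulE_uid]
  · -- uniqueness under U-positive definiteness
    intro hpd X X' hX hX' hout
    by_contra hne
    have hdne : X t₀ - X' t₀ ≠ 0 := sub_ne_zero.mpr hne
    have hz : bilin (obsGramian A C t₀ t₁) (X t₀ - X' t₀) (X t₀ - X' t₀) = 0 := by
      rw [bilin_obsGramian]
      refine Finset.sum_eq_zero fun t htm => ?_
      have h0 : t₀ ≤ t := (Finset.mem_Icc.mp htm).1
      have hXt := state_formula A X t₀ hX (t - t₀)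
      have hXt' := state_formula A X' t₀ hX' (t - t₀)
      rw [Nat.add_sub_cancel' h0] at hXt hXt'
      have hzero : mulE C (mulE (epow A (t - t₀)) (X t₀ - X' t₀)) = 0 := by
        rw [mulE_sub, mulE_sub, ← hXt, ← hXt', hout t htm, sub_self]
      rw [hzero]
      simp
    exact (hpd _ hdne).ne' hz
  · -- converse
    intro hnpd
    rw [UPosDef] at hnpd
    push_neg at hnpd
    obtain ⟨x, hx0, hxle⟩ := hnpd
    have hge : 0 ≤ bilin (obsGramian A C t₀ t₁) x x := by
      rw [bilin_obsGramian]
      exact Finset.sum_nonneg fun t _ => Finset.sum_nonneg fun k _ => sq_nonneg _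
    have heq0 : bilin (obsGramian A C t₀ t₁) x x = 0 := le_antisymm hxle hge
    rw [bilin_obsGramian] at heq0
    have h1 := (Finset.sum_eq_zero_iff_of_nonneg
      (fun t _ => Finset.sum_nonneg fun k _ => sq_nonneg _)).mp heq0
    have hterm : ∀ t ∈ Finset.Icc t₀ (t₁ - 1),
        mulE C (mulE (epow A (t - t₀)) x) = 0 := by
      intro t htm
      have h2 := (Finset.sum_eq_zero_iff_of_nonneg
        (fun k _ => sq_nonneg _)).mp (h1 t htm)
      funext k
      exact sq_eq_zero_iff.mp (h2 k (Finset.mem_univ k))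
    refine ⟨fun t => mulE (epow A (t - t₀)) x, fun _ => 0, ?_, ?_, ?_, ?_⟩
    · intro t hle
      have hts : t + 1 - t₀ = (t - t₀) + 1 := by omega
      show mulE (epow A (t + 1 - t₀)) x = mulE A (mulE (epow A (t - t₀)) x)
      rw [hts, show epow A ((t - t₀) + 1) = einstein A (epow A (t - t₀)) from rfl,
        mulE_einstein]
    · intro t _
      rw [mulE_zero]
    · intro t htm
      rw [hterm t htm, mulE_zero]
    · show mulE (epow A (t₀ - t₀)) x ≠ 0
      rw [Nat.sub_self, show epow A 0 = uid ℝ J from rfl, mulE_uid]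
      exact hx0
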